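/- Entropy continuity under trace-norm perturbation (Fannes-type): for density matrices ρ, σ on a d-dimensional Hilbert space with T = (1/2)‖ρ - σ‖₁ ≤ 1/e, the von Neumann entropies satisfy |S(ρ) - S(σ)| ≤ T·log₂(d-1) + H₂(T), where H₂(T) = -T log₂ T - (1-T) log₂(1-T). -/

import Mathlib

open scoped ComplexOrder
/-- The von Neumann entropy (base 2) of a Hermitian matrix, `-Tr(ρ log₂ ρ)`, expressed
through its eigenvalues (with the convention `0 log₂ 0 = 0`). -/
noncomputable def vnEntropy {d : ℕ} {ρ : Matrix (Fin d) (Fin d) ℂ}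
    (h : ρ.IsHermitian) : ℝ :=
  -∑ i, h.eigenvalues i * Real.logb 2 (h.eigenvalues i)

/-- The trace norm `‖A‖₁` of a Hermitian matrix: the sum of the absolute values of its
eigenvalues. -/
noncomputable def traceNormHerm {d : ℕ} {A : Matrix (Fin d) (Fin d) ℂ}
    (h : A.IsHermitian) : ℝ :=
  ∑ i, |h.eigenvalues i|

/-- The binary entropy function `H₂(T) = -T log₂ T - (1-T) log₂(1-T)` (with `H₂(0) = 0`). -/
noncomputable def binEntropy (T : ℝ) : ℝ :=
  -(T * Real.logb 2 T) - (1 - T) * Real.logb 2 (1 - T)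

/-!
Order the spectra decreasingly. Weyl's monotonicity theorem (`A ≤ C` implies
`λₖ(A) ≤ λₖ(C)`, by a dimension count on spans of eigenvectors), applied to
`C = σ + (ρ - σ)⁺`, which dominates both `ρ` and `σ` and has `2 tr C - tr ρ - tr σ = ‖ρ - σ‖₁`,
gives Mirsky's bound `½ ∑ₖ |λₖ(ρ) - λₖ(σ)| ≤ T`. Since `t ↦ t log(d - 1) + H₂(t)` increases on
`[0, 1/2] ⊇ [0, 1/e]`, this reduces the claim to the Fannes–Audenaert inequality for the
probability vectors `p = λ(ρ)`, `q = λ(σ)`.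

For that, write `p = m + a` with `m = min p q` and `a = (p - q)⁺`; then `a` has mass
`t = ½ ‖p - q‖₁` and vanishes wherever `p ≤ q`, so on at least one point. With
`η x = -x log x`: subadditivity of `η` gives `H(p) ≤ H(m) + H(a)`, Jensen on the support of `a`
gives `H(a) ≤ t log(d - 1) + η t`, and concavity of `η` at `q = (1 - t) (m / (1 - t)) + t (b / t)`
with `b = q - m` gives `H(m) ≤ H(q) + η (1 - t)`.
-/

open Module Finset
open scoped InnerProductSpace

lemma OrthonormalBasis.inner_eq_zero_of_mem_span {ι 𝕜 E : Type*} [Fintype ι] [RCLike 𝕜]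
    [NormedAddCommGroup E] [InnerProductSpace 𝕜 E] (b : OrthonormalBasis ι 𝕜 E) {s : Set ι}
    {i : ι} (hi : i ∉ s) {x : E} (hx : x ∈ Submodule.span 𝕜 (b '' s)) : ⟪b i, x⟫_𝕜 = 0 := by
  refine (Submodule.mem_orthogonal_singleton_iff_inner_right (𝕜 := 𝕜)).1
    (Submodule.span_le.2 ?_ hx)
  rintro _ ⟨j, hj, rfl⟩
  exact (Submodule.mem_orthogonal_singleton_iff_inner_right (𝕜 := 𝕜)).2
    (b.orthonormal.2 (ne_of_mem_of_not_mem hj hi).symm)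

namespace LinearMap.IsSymmetric

variable {𝕜 E : Type*} [RCLike 𝕜] [NormedAddCommGroup E] [InnerProductSpace 𝕜 E]
  [FiniteDimensional 𝕜 E] {T S : E →ₗ[𝕜] E} {n : ℕ}

lemma re_inner_apply_self_eq_sum (hT : T.IsSymmetric) (hn : finrank 𝕜 E = n) (x : E) :
    RCLike.re ⟪T x, x⟫_𝕜 =
      ∑ i, hT.eigenvalues hn i * ‖⟪hT.eigenvectorBasis hn i, x⟫_𝕜‖ ^ 2 := by
  rw [← (hT.eigenvectorBasis hn).sum_inner_mul_inner, map_sum]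
  refine sum_congr rfl fun i _ => ?_
  rw [hT, apply_eigenvectorBasis, inner_smul_right, mul_assoc, RCLike.re_ofReal_mul,
    inner_mul_symm_re_eq_norm, norm_mul, norm_inner_symm, sq]

lemma mul_norm_sq_le_re_inner_apply_self (hT : T.IsSymmetric) (hn : finrank 𝕜 E = n)
    {s : Set (Fin n)} {c : ℝ} (hc : ∀ i ∈ s, c ≤ hT.eigenvalues hn i) {x : E}
    (hx : x ∈ Submodule.span 𝕜 (hT.eigenvectorBasis hn '' s)) :
    c * ‖x‖ ^ 2 ≤ RCLike.re ⟪T x, x⟫_𝕜 := by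
  rw [hT.re_inner_apply_self_eq_sum hn, ← (hT.eigenvectorBasis hn).sum_sq_norm_inner_right,
    mul_sum]
  refine sum_le_sum fun i _ => ?_
  by_cases hi : i ∈ s
  · exact mul_le_mul_of_nonneg_right (hc i hi) (by positivity)
  · simp [(hT.eigenvectorBasis hn).inner_eq_zero_of_mem_span hi hx]

lemma re_inner_apply_self_le_mul_norm_sq (hT : T.IsSymmetric) (hn : finrank 𝕜 E = n)
    {s : Set (Fin n)} {c : ℝ} (hc : ∀ i ∈ s, hT.eigenvalues hn i ≤ c) {x : E}
    (hx : x ∈ Submodule.span 𝕜 (hT.eigenvectorBasis hn '' s)) :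
    RCLike.re ⟪T x, x⟫_𝕜 ≤ c * ‖x‖ ^ 2 := by
  rw [hT.re_inner_apply_self_eq_sum hn, ← (hT.eigenvectorBasis hn).sum_sq_norm_inner_right,
    mul_sum]
  refine sum_le_sum fun i _ => ?_
  by_cases hi : i ∈ s
  · exact mul_le_mul_of_nonneg_right (hc i hi) (by positivity)
  · simp [(hT.eigenvectorBasis hn).inner_eq_zero_of_mem_span hi hx]

lemma finrank_span_eigenvectorBasis_image (hT : T.IsSymmetric) (hn : finrank 𝕜 E = n)
    (s : Finset (Fin n)) :
    finrank 𝕜 (Submodule.span 𝕜 (hT.eigenvectorBasis hn '' s)) = s.card := by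
  rw [Set.image_eq_range]
  exact (finrank_span_eq_card ((hT.eigenvectorBasis hn).orthonormal.linearIndependent.comp
    ((↑) : s → Fin n) Subtype.val_injective)).trans (by simp)

theorem eigenvalues_le_eigenvalues_of_le (hT : T.IsSymmetric) (hS : S.IsSymmetric)
    (hn : finrank 𝕜 E = n) (hTS : T ≤ S) (k : Fin n) :
    hT.eigenvalues hn k ≤ hS.eigenvalues hn k := by
  set V := Submodule.span 𝕜 (hT.eigenvectorBasis hn '' (Iic k : Set (Fin n)))
  set W := Submodule.span 𝕜 (hS.eigenvectorBasis hn '' (Ici k : Set (Fin n)))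
  have hVW : finrank 𝕜 E < finrank 𝕜 V + finrank 𝕜 W := by
    rw [hT.finrank_span_eigenvectorBasis_image, hS.finrank_span_eigenvectorBasis_image,
      Fin.card_Iic, Fin.card_Ici, hn]
    omega
  obtain ⟨x, ⟨hxV, hxW⟩, hx0⟩ : ∃ x ∈ V ⊓ W, x ≠ 0 := by
    refine Submodule.exists_mem_ne_zero_of_ne_bot fun h => ?_
    have := Submodule.finrank_sup_add_finrank_inf_eq V W
    rw [h, finrank_bot] at this
    linarith [Submodule.finrank_le (V ⊔ W)]
  have hT_low := hT.mul_norm_sq_le_re_inner_apply_self hn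
    (fun i hi => hT.eigenvalues_antitone hn (mem_Iic.1 hi)) hxV
  have hS_high := hS.re_inner_apply_self_le_mul_norm_sq hn
    (fun i hi => hS.eigenvalues_antitone hn (mem_Ici.1 hi)) hxW
  have hTS_x : RCLike.re ⟪T x, x⟫_𝕜 ≤ RCLike.re ⟪S x, x⟫_𝕜 := by
    simpa [inner_sub_left] using hTS.re_inner_nonneg_left x
  exact le_of_mul_le_mul_right (hT_low.trans (hTS_x.trans hS_high)) (by positivity)

end LinearMap.IsSymmetric

open scoped MatrixOrder

namespace Matrix.IsHermitian

variable {𝕜 n : Type*} [RCLike 𝕜] [Fintype n] [DecidableEq n] {A B : Matrix n n 𝕜}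

lemma sum_comp_eigenvalues₀ (hA : A.IsHermitian) (f : ℝ → ℝ) :
    ∑ k, f (hA.eigenvalues₀ k) = ∑ i, f (hA.eigenvalues i) :=
  (Equiv.sum_comp (Fintype.equivOfCardEq (Fintype.card_fin _)).symm _).symm

lemma eigenvalues₀_le_eigenvalues₀_of_le (hA : A.IsHermitian) (hB : B.IsHermitian) (hAB : A ≤ B)
    (k : Fin (Fintype.card n)) : hA.eigenvalues₀ k ≤ hB.eigenvalues₀ k := by
  refine LinearMap.IsSymmetric.eigenvalues_le_eigenvalues_of_le _ _ _ ?_ k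
  rw [LinearMap.le_def, ← map_sub, isPositive_toEuclideanLin_iff]
  exact hAB

lemma trace_eq_sum_eigenvalues₀ (hA : A.IsHermitian) :
    A.trace = ∑ k, (hA.eigenvalues₀ k : 𝕜) := by
  rw [hA.trace_eq_sum_eigenvalues]
  exact (Equiv.sum_comp (Fintype.equivOfCardEq (Fintype.card_fin _)).symm
    fun k => (hA.eigenvalues₀ k : 𝕜))

lemma sum_eigenvalues₀_eq_re_trace (hA : A.IsHermitian) :
    ∑ k, hA.eigenvalues₀ k = RCLike.re A.trace := by
  simp [hA.trace_eq_sum_eigenvalues₀]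

lemma trace_cfc (hA : A.IsHermitian) (f : ℝ → ℝ) :
    (cfc f A).trace = ∑ i, (f (hA.eigenvalues i) : 𝕜) := by
  rw [hA.cfc_eq, IsHermitian.cfc, Unitary.conjStarAlgAut_apply, trace_mul_cycle,
    Unitary.coe_star_mul_self, one_mul, trace_diagonal]
  rfl

lemma trace_posPart (hA : A.IsHermitian) :
    (A⁺).trace = ∑ i, (((hA.eigenvalues i)⁺ : ℝ) : 𝕜) := by
  rw [CFC.posPart_def, cfcₙ_eq_cfc, hA.trace_cfc]

end Matrix.IsHermitian

lemma Matrix.PosSemidef.eigenvalues₀_nonneg {𝕜 n : Type*} [RCLike 𝕜] [Fintype n] [DecidableEq n]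
    {A : Matrix n n 𝕜} (hA : A.PosSemidef) (k : Fin (Fintype.card n)) :
    0 ≤ hA.1.eigenvalues₀ k := by
  simpa [Matrix.IsHermitian.eigenvalues] using
    hA.eigenvalues_nonneg (Fintype.equivOfCardEq (Fintype.card_fin _) k)

theorem Matrix.IsHermitian.sum_abs_eigenvalues₀_sub_le_traceNormHerm {d : ℕ}
    {A B : Matrix (Fin d) (Fin d) ℂ} (hA : A.IsHermitian) (hB : B.IsHermitian) :
    ∑ k, |hA.eigenvalues₀ k - hB.eigenvalues₀ k| ≤ traceNormHerm (hA.sub hB) := by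
  set hΔ := hA.sub hB
  set C := B + (A - B)⁺
  have hC : C.IsHermitian :=
    hB.add (nonneg_iff_posSemidef.1 (CFC.posPart_nonneg (A - B))).isHermitian
  have hAC : A ≤ C := by
    calc A = B + (A - B) := (add_sub_cancel B A).symm
      _ ≤ C := add_le_add le_rfl (CFC.le_posPart hΔ.isSelfAdjoint)
  have hBC : B ≤ C := le_add_of_nonneg_right (CFC.posPart_nonneg _)
  have hpoint (k : Fin (Fintype.card (Fin d))) : |hA.eigenvalues₀ k - hB.eigenvalues₀ k| ≤
      2 * hC.eigenvalues₀ k - hA.eigenvalues₀ k - hB.eigenvalues₀ k := by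
    have := hA.eigenvalues₀_le_eigenvalues₀_of_le hC hAC k
    have := hB.eigenvalues₀_le_eigenvalues₀_of_le hC hBC k
    rw [abs_le]
    constructor <;> linarith
  have hnorm : traceNormHerm hΔ =
      2 * ∑ i, (hΔ.eigenvalues i)⁺ - ∑ i, hΔ.eigenvalues i := by
    rw [traceNormHerm, mul_sum, ← sum_sub_distrib]
    refine sum_congr rfl fun i _ => ?_
    linarith [abs_add_eq_two_nsmul_posPart (hΔ.eigenvalues i), two_nsmul (hΔ.eigenvalues i)⁺]
  have htrace : ∑ k, (2 * hC.eigenvalues₀ k - hA.eigenvalues₀ k - hB.eigenvalues₀ k) =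
      traceNormHerm hΔ := by
    rw [hnorm]
    apply Complex.ofReal_injective
    push_cast
    have hCtr : C.trace = B.trace + (A - B)⁺.trace := trace_add _ _
    have hΔtr : (A - B).trace = A.trace - B.trace := trace_sub _ _
    rw [hC.trace_eq_sum_eigenvalues₀, hΔ.trace_posPart, hB.trace_eq_sum_eigenvalues₀] at hCtr
    rw [hΔ.trace_eq_sum_eigenvalues, hA.trace_eq_sum_eigenvalues₀,
      hB.trace_eq_sum_eigenvalues₀] at hΔtr
    rw [sum_sub_distrib, sum_sub_distrib, ← mul_sum]
    linear_combination 2 * hCtr + hΔtr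
  exact htrace ▸ sum_le_sum fun k _ => hpoint k

namespace Real

lemma negMulLog_add_le {x y : ℝ} (hx : 0 ≤ x) (hy : 0 ≤ y) :
    negMulLog (x + y) ≤ negMulLog x + negMulLog y := by
  have mul_log_le {u : ℝ} (hu : 0 ≤ u) (huv : u ≤ x + y) : u * log u ≤ u * log (x + y) := by
    rcases hu.eq_or_lt with rfl | hu
    · simp
    · exact mul_le_mul_of_nonneg_left (log_le_log hu huv) hu.le
  have := mul_log_le hx (by linarith)
  have := mul_log_le hy (by linarith)
  simp only [negMulLog, neg_mul, add_mul]
  linarith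

lemma sum_negMulLog_le_mul_log_card_add {ι : Type*} (s : Finset ι) {a : ι → ℝ}
    (ha : ∀ i ∈ s, 0 ≤ a i) :
    ∑ i ∈ s, negMulLog (a i) ≤ (∑ i ∈ s, a i) * log #s + negMulLog (∑ i ∈ s, a i) := by
  rcases s.eq_empty_or_nonempty with rfl | hs
  · simp
  have hn : (0 : ℝ) < #s := by exact_mod_cast hs.card_pos
  have jensen := concaveOn_negMulLog.le_map_sum (t := s) (w := fun _ => (#s : ℝ)⁻¹) (p := a)
    (fun _ _ => by positivity) (by simp [hn.ne']) (fun i hi => ha i hi)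
  simp only [smul_eq_mul, ← mul_sum] at jensen
  rw [mul_comm, negMulLog_mul, negMulLog, log_inv] at jensen
  have := mul_le_mul_of_nonneg_left jensen hn.le
  field_simp at this
  linarith

lemma negMulLog_le_negMulLog_add {x y s t : ℝ} (hx : 0 ≤ x) (hy : 0 ≤ y) (hyt : y ≤ t)
    (hs : 0 < s) (hst : s + t = 1) :
    negMulLog x ≤ negMulLog (x + y) + x / s * negMulLog s := by
  have hsplit : negMulLog x = s * negMulLog (x / s) + x / s * negMulLog s := by
    rw [← negMulLog_mul, div_mul_cancel₀ x hs.ne']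
  rcases (hy.trans hyt).eq_or_lt with rfl | ht
  · obtain rfl : y = 0 := by linarith
    rw [hsplit, show s = 1 by linarith]
    simp
  -- concavity at `x + y = s • (x / s) + t • (y / t)`, where `η (y / t) ≥ 0`
  have hconc := concaveOn_negMulLog.2 (x := x / s) (y := y / t) (div_nonneg hx hs.le)
    (div_nonneg hy ht.le) hs.le ht.le hst
  simp only [smul_eq_mul, mul_div_cancel₀ _ hs.ne', mul_div_cancel₀ _ ht.ne'] at hconc
  have : 0 ≤ negMulLog (y / t) := negMulLog_nonneg (by positivity) ((div_le_one ht).2 hyt)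
  nlinarith

lemma sum_negMulLog_le_sum_negMulLog_add {ι : Type*} [Fintype ι] {m q : ι → ℝ}
    (hm : ∀ i, 0 ≤ m i) (hmq : ∀ i, m i ≤ q i) (hq : ∑ i, q i = 1) :
    ∑ i, negMulLog (m i) ≤ ∑ i, negMulLog (q i) + negMulLog (∑ i, m i) := by
  have hq_le_one (i : ι) : q i ≤ 1 :=
    hq ▸ single_le_sum (fun j _ => (hm j).trans (hmq j)) (mem_univ i)
  rcases (sum_nonneg fun i _ => hm i).eq_or_lt with hs | hs
  · have hm0 := (Fintype.sum_eq_zero_iff_of_nonneg hm).1 hs.symm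
    simp only [hm0, Pi.zero_apply, negMulLog_zero, sum_const_zero, add_zero]
    exact sum_nonneg fun i _ => negMulLog_nonneg ((hm i).trans (hmq i)) (hq_le_one i)
  calc ∑ i, negMulLog (m i)
      ≤ ∑ i, (negMulLog (q i) + m i / (∑ j, m j) * negMulLog (∑ j, m j)) := by
        refine sum_le_sum fun i _ => ?_
        have := negMulLog_le_negMulLog_add (hm i) (sub_nonneg.2 (hmq i)) ?_ hs
          (add_sub_cancel _ _)
        · rwa [add_sub_cancel] at this
        · rw [← hq, ← sum_sub_distrib]
          exact single_le_sum (fun j _ => sub_nonneg.2 (hmq j)) (mem_univ i)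
    _ = ∑ i, negMulLog (q i) + negMulLog (∑ i, m i) := by
        rw [sum_add_distrib, ← sum_mul, ← sum_div, div_self hs.ne', one_mul]

end Real

section Fannes

open Real

variable {ι : Type*} [Fintype ι] {p q : ι → ℝ}

lemma sum_posPart_sub_eq_half_sum_abs_sub (h : ∑ i, p i = ∑ i, q i) :
    ∑ i, (p i - q i)⁺ = 1 / 2 * ∑ i, |p i - q i| := by
  have := sum_congr rfl fun i (_ : i ∈ univ) => abs_add_eq_two_nsmul_posPart (p i - q i)
  rw [sum_add_distrib, sum_sub_distrib, h, sub_self, add_zero, ← smul_sum, two_nsmul] at this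
  linarith

theorem sum_negMulLog_sub_sum_negMulLog_le (hp : ∀ i, 0 ≤ p i) (hq : ∀ i, 0 ≤ q i)
    (hp1 : ∑ i, p i = 1) (hq1 : ∑ i, q i = 1) :
    ∑ i, negMulLog (p i) - ∑ i, negMulLog (q i) ≤
      (1 / 2 * ∑ i, |p i - q i|) * log (Fintype.card ι - 1) +
        Real.binEntropy (1 / 2 * ∑ i, |p i - q i|) := by
  classical
  set T := 1 / 2 * ∑ i, |p i - q i|
  have hne : (univ : Finset ι).Nonempty := nonempty_of_sum_ne_zero (hp1 ▸ one_ne_zero)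
  have hpq : ∑ i, p i = ∑ i, q i := hp1.trans hq1.symm
  have hsum_pos : ∑ i, (p i - q i)⁺ = T := sum_posPart_sub_eq_half_sum_abs_sub hpq
  have hsplit (i : ι) : p i = min (p i) (q i) + (p i - q i)⁺ := by
    rw [inf_eq_sub_posPart_sub, sub_add_cancel]
  have hsum_min : ∑ i, min (p i) (q i) = 1 - T := by
    rw [← hp1, ← hsum_pos, ← sum_sub_distrib]
    exact sum_congr rfl fun i _ => by linarith [hsplit i]
  -- the positive part of `p - q` vanishes somewhere, so it lives on `#ι - 1` points
  obtain ⟨i₀, -, hi₀⟩ := exists_le_of_sum_le hne hpq.le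
  have hi₀' : (p i₀ - q i₀)⁺ = 0 := posPart_eq_zero.2 (sub_nonpos.2 hi₀)
  have hmin := sum_negMulLog_le_sum_negMulLog_add (m := fun i => min (p i) (q i))
    (fun i => le_min (hp i) (hq i)) (fun i => min_le_right _ _) hq1
  have hpos := sum_negMulLog_le_mul_log_card_add (univ.erase i₀) (a := fun i => (p i - q i)⁺)
    (fun i _ => posPart_nonneg _)
  rw [sum_erase _ (by simp [hi₀']), sum_erase univ (f := fun i => (p i - q i)⁺) hi₀', hsum_pos,
    card_erase_of_mem (mem_univ _), Nat.cast_sub (card_pos.2 hne), Nat.cast_one, card_univ]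
    at hpos
  have hp_le : ∑ i, negMulLog (p i) ≤
      ∑ i, negMulLog (min (p i) (q i)) + ∑ i, negMulLog (p i - q i)⁺ := by
    rw [← sum_add_distrib]
    refine sum_le_sum fun i _ => ?_
    conv_lhs => rw [hsplit i]
    exact negMulLog_add_le (le_min (hp i) (hq i)) (posPart_nonneg _)
  rw [binEntropy_eq_negMulLog_add_negMulLog_one_sub]
  simp only [hsum_min] at hmin
  linarith

theorem abs_sum_negMulLog_sub_sum_negMulLog_le (hp : ∀ i, 0 ≤ p i) (hq : ∀ i, 0 ≤ q i)
    (hp1 : ∑ i, p i = 1) (hq1 : ∑ i, q i = 1) :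
    |∑ i, negMulLog (p i) - ∑ i, negMulLog (q i)| ≤
      (1 / 2 * ∑ i, |p i - q i|) * log (Fintype.card ι - 1) +
        Real.binEntropy (1 / 2 * ∑ i, |p i - q i|) := by
  refine abs_sub_le_iff.2 ⟨sum_negMulLog_sub_sum_negMulLog_le hp hq hp1 hq1, ?_⟩
  simpa only [abs_sub_comm] using sum_negMulLog_sub_sum_negMulLog_le hq hp hq1 hp1

lemma monotoneOn_mul_add_binEntropy {c : ℝ} (hc : 0 ≤ c) :
    MonotoneOn (fun t => t * c + Real.binEntropy t) (Set.Icc 0 2⁻¹) := fun _ hs _ ht hst =>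
  add_le_add (mul_le_mul_of_nonneg_right hst hc) (binEntropy_strictMonoOn.monotoneOn hs ht hst)

end Fannes

lemma vnEntropy_eq_sum_negMulLog_div {d : ℕ} {ρ : Matrix (Fin d) (Fin d) ℂ}
    (h : ρ.IsHermitian) :
    vnEntropy h = (∑ k, Real.negMulLog (h.eigenvalues₀ k)) / Real.log 2 := by
  rw [vnEntropy, h.sum_comp_eigenvalues₀, sum_div, ← sum_neg_distrib]
  refine sum_congr rfl fun i _ => ?_
  rw [Real.negMulLog, Real.logb]
  ring

lemma binEntropy_eq_div_log_two (t : ℝ) : binEntropy t = Real.binEntropy t / Real.log 2 := by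
  rw [binEntropy, Real.binEntropy_eq_negMulLog_add_negMulLog_one_sub, Real.negMulLog,
    Real.negMulLog, Real.logb, Real.logb]
  ring

/-- Fannes–Audenaert type entropy continuity: for density matrices `ρ, σ` on a
`d`-dimensional Hilbert space (`d ≥ 2`) with `T = (1/2)‖ρ - σ‖₁ ≤ 1/e`, we have
`|S(ρ) - S(σ)| ≤ T log₂(d-1) + H₂(T)`. -/
theorem fannes_entropy_continuity (d : ℕ) (hd : 2 ≤ d)
    (ρ σ : Matrix (Fin d) (Fin d) ℂ)
    (hρ : ρ.PosSemidef) (hσ : σ.PosSemidef)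
    (hρtr : ρ.trace = 1) (hσtr : σ.trace = 1)
    (T : ℝ) (hT : T = (1 / 2) * traceNormHerm (hρ.1.sub hσ.1))
    (hTe : T ≤ (Real.exp 1)⁻¹) :
    |vnEntropy hρ.1 - vnEntropy hσ.1| ≤ T * Real.logb 2 ((d : ℝ) - 1) + binEntropy T := by
  set Tc := 1 / 2 * ∑ k, |hρ.1.eigenvalues₀ k - hσ.1.eigenvalues₀ k|
  have hTc_le : Tc ≤ T := hT ▸ mul_le_mul_of_nonneg_left
    (hρ.1.sum_abs_eigenvalues₀_sub_le_traceNormHerm hσ.1) (by norm_num)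
  have hT_half : T ≤ 2⁻¹ :=
    hTe.trans (inv_anti₀ two_pos (by linarith [Real.add_one_le_exp 1]))
  have hlog : 0 ≤ Real.log ((d : ℝ) - 1) := by
    have : (2 : ℝ) ≤ d := by exact_mod_cast hd
    exact Real.log_nonneg (by linarith)
  have hfannes := abs_sum_negMulLog_sub_sum_negMulLog_le hρ.eigenvalues₀_nonneg
    hσ.eigenvalues₀_nonneg (by simp [hρ.1.sum_eigenvalues₀_eq_re_trace, hρtr])
    (by simp [hσ.1.sum_eigenvalues₀_eq_re_trace, hσtr])
  simp only [Fintype.card_fin] at hfannes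
  have hmono := monotoneOn_mul_add_binEntropy hlog ⟨by positivity, hTc_le.trans hT_half⟩
    ⟨(by positivity : 0 ≤ Tc).trans hTc_le, hT_half⟩ hTc_le
  have hlog2 : 0 < Real.log 2 := Real.log_pos one_lt_two
  rw [vnEntropy_eq_sum_negMulLog_div, vnEntropy_eq_sum_negMulLog_div, binEntropy_eq_div_log_two,
    Real.logb, ← sub_div, abs_div, abs_of_pos hlog2, mul_div_assoc', ← add_div]
  exact div_le_div_of_nonneg_right (hfannes.trans hmono) hlog2.le
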